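/- arXiv:2506.07755 — 2 statements merged into one kernel-verified Lean document; each statement's English description precedes it below -/
import Mathlib

section
/- Let E be a real normed vector space and U a set of control inputs. Suppose h : E → ℝ is differentiable, φ : E → E is differentiable with h ∘ φ = h, ψ : U → U is a map, f : E × U → E is a dynamics map satisfying the equivariance condition f(φ(x), ψ(u)) = Dφ(x)[f(x, u)] for all x ∈ E, u ∈ U, and α : ℝ → ℝ is any function. If the control barrier function constraint Dh(x)[f(x, u)] ≥ -α(h(x)) holds at (x, u), then the transformed constraint Dh(φ(x))[f(φ(x), ψ(u))] ≥ -α(h(φ(x))) also holds. -/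
theorem fderiv_apply_fderiv_of_comp_eq_self {𝕜 E F : Type*} [NontriviallyNormedField 𝕜]
    [NormedAddCommGroup E] [NormedSpace 𝕜 E] [NormedAddCommGroup F] [NormedSpace 𝕜 F]
    {h : E → F} {φ : E → E} {x : E} (hinv : h ∘ φ = h)
    (hh : DifferentiableAt 𝕜 h (φ x)) (hφ : DifferentiableAt 𝕜 φ x) (v : E) :
    fderiv 𝕜 h (φ x) (fderiv 𝕜 φ x v) = fderiv 𝕜 h x v := by
  rw [← ContinuousLinearMap.comp_apply, ← fderiv_comp x hh hφ, hinv]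

/-- Preservation of the control barrier function constraint under symmetry: if `h` is
invariant under `φ` (`h ∘ φ = h`), the dynamics `f` are equivariant
(`f (φ x, ψ u) = Dφ x [f (x, u)]`), and the CBF constraint
`Dh x [f (x, u)] ≥ -α (h x)` holds at `(x, u)`, then the transformed constraint
`Dh (φ x) [f (φ x, ψ u)] ≥ -α (h (φ x))` also holds. -/
theorem cbf_constraint_preserved {E U : Type*} [NormedAddCommGroup E]
    [NormedSpace ℝ E] (h : E → ℝ) (φ : E → E) (ψ : U → U) (f : E × U → E)
    (α : ℝ → ℝ)
    (hh : Differentiable ℝ h) (hφ : Differentiable ℝ φ)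
    (hinv : h ∘ φ = h)
    (hequiv : ∀ (x : E) (u : U), f (φ x, ψ u) = fderiv ℝ φ x (f (x, u)))
    (x : E) (u : U)
    (hcbf : fderiv ℝ h x (f (x, u)) ≥ -α (h x)) :
    fderiv ℝ h (φ x) (f (φ x, ψ u)) ≥ -α (h (φ x)) := by
  have hval : h (φ x) = h x := congrFun hinv x
  rwa [hequiv, fderiv_apply_fderiv_of_comp_eq_self hinv (hh (φ x)) (hφ x), hval]
end

section
/- Let X be a set of states, E a real normed vector space, ψ : E → E a norm-preserving linear bijection, φ : X → X, π_nom : X → E equivariant (π_nom(φ(x)) = ψ(π_nom(x))), and K : X → Set E with K(φ(x)) = ψ '' K(x). Suppose π* : X → E is a selection such that for every x ∈ X, π*(x) ∈ K(x), π*(x) minimizes u ↦ ‖u − π_nom(x)‖ over K(x), and this minimizer is unique (any v ∈ K(x) with ‖v − π_nom(x)‖ = ‖π*(x) − π_nom(x)‖ equals π*(x)). Then π* is equivariant: π*(φ(x)) = ψ(π*(x)) for all x ∈ X. -/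
/-!
The isometry `ψ` carries `K x` onto `K (φ x)` and `π_nom x` to `π_nom (φ x)`, so it carries a
nearest point of `K x` to `π_nom x` to a nearest point of `K (φ x)` to `π_nom (φ x)`.
Uniqueness of the nearest point then forces `ψ (π* x) = π* (φ x)`.
-/

theorem Isometry.isMinOn_dist_image {α β : Type*} [PseudoMetricSpace α] [PseudoMetricSpace β]
    {f : α → β} (hf : Isometry f) {s : Set α} {p u : α} (h : IsMinOn (dist · p) s u) :
    IsMinOn (dist · (f p)) (f '' s) (f u) := by
  rintro _ ⟨v, hv, rfl⟩
  simpa only [Set.mem_ofPred_eq, hf.dist_eq] using h hv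

theorem IsMinOn.apply_eq_of_isMinOn {α β : Type*} [PartialOrder β] {f : α → β} {s : Set α}
    {a b : α} (ha : IsMinOn f s a) (hb : IsMinOn f s b) (has : a ∈ s) (hbs : b ∈ s) :
    f a = f b :=
  le_antisymm (ha hbs) (hb has)

/-- Equivariance of the safety-filtered policy: if `π*` selects, at each state, the
unique minimizer of `‖u − π_nom x‖` over the feasible set `K x`, with `π_nom`
equivariant and `K (φ x) = ψ '' K x` for a linear isometric equivalence `ψ`, then
`π*` is equivariant: `π* (φ x) = ψ (π* x)`. -/
theorem qp_policy_equivariant {X E : Type*} [NormedAddCommGroup E]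
    [NormedSpace ℝ E] (φ : X → X) (ψ : E ≃ₗᵢ[ℝ] E) (πnom : X → E)
    (hπ : ∀ x : X, πnom (φ x) = ψ (πnom x))
    (K : X → Set E) (hK : ∀ x : X, K (φ x) = ψ '' K x)
    (πstar : X → E)
    (hmem : ∀ x : X, πstar x ∈ K x)
    (hmin : ∀ x : X, ∀ v ∈ K x, ‖πstar x - πnom x‖ ≤ ‖v - πnom x‖)
    (huniq : ∀ x : X, ∀ v ∈ K x,
      ‖v - πnom x‖ = ‖πstar x - πnom x‖ → v = πstar x) :
    ∀ x : X, πstar (φ x) = ψ (πstar x) := by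
  intro x
  have hmin_dist (y : X) : IsMinOn (dist · (πnom y)) (K y) (πstar y) := fun v hv => by
    simpa only [Set.mem_ofPred_eq, dist_eq_norm] using hmin y v hv
  have hψ_mem : ψ (πstar x) ∈ K (φ x) := hK x ▸ Set.mem_image_of_mem ψ (hmem x)
  have hψ_min : IsMinOn (dist · (πnom (φ x))) (K (φ x)) (ψ (πstar x)) := by
    rw [hK x, hπ x]
    exact ψ.isometry.isMinOn_dist_image (hmin_dist x)
  have hdist := (hmin_dist (φ x)).apply_eq_of_isMinOn hψ_min (hmem (φ x)) hψ_mem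
  rw [dist_eq_norm, dist_eq_norm] at hdist
  exact (huniq (φ x) _ hψ_mem hdist.symm).symm
end
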